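/- Let H be a complex Hilbert space, X ∈ B(H) a normal operator (X*X = XX*), and T₀, T₁ ∈ B(H). Set P := 1 + X*X (a positive invertible operator), T̃₀ := P^{1/2} T₁ P^{−1/2} and T̃₁ := P^{−1/2} T₀ P^{1/2}, and let T = [[T₀, XT₁−T₀X],[0,T₁]] and T̃ = [[T̃₀, X*T̃₁−T̃₀X*],[0,T̃₁]] act on H ⊕ H. Then the block operator U := [[X*P^{−1/2}, P^{−1/2}],[P^{−1/2}, −P^{−1/2}X]] on H ⊕ H is unitary and UTU* = T̃. -/

import Mathlib

/-!
Everything reduces to 2 × 2 block-operator algebra once one knows that `X`, `X*` and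
`R = P^{-1/2}` pairwise commute. Normality makes `X` commute with `P = 1 + X*X`; the positive
square root `P^{1/2}` is a continuous function of `P`, so it commutes with `X` too, and hence so
does its inverse `R`. Then `U*U = UU* = 1` reduces entrywise to `(1 + X*X) R² = 1`, and the entries
of `UTU*` collapse to those of `T̃` via `(1 + X*X) R = P^{1/2}`.
-/

open ContinuousLinearMap

noncomputable def blockOp {H₀ H₁ K₀ K₁ : Type*}
    [NormedAddCommGroup H₀] [InnerProductSpace ℂ H₀]
    [NormedAddCommGroup H₁] [InnerProductSpace ℂ H₁]
    [NormedAddCommGroup K₀] [InnerProductSpace ℂ K₀]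
    [NormedAddCommGroup K₁] [InnerProductSpace ℂ K₁]
    (A : H₀ →L[ℂ] K₀) (B : H₁ →L[ℂ] K₀) (C : H₀ →L[ℂ] K₁) (D : H₁ →L[ℂ] K₁) :
    WithLp 2 (H₀ × H₁) →L[ℂ] WithLp 2 (K₀ × K₁) :=
  (((WithLp.prodContinuousLinearEquiv 2 ℂ K₀ K₁).symm : (K₀ × K₁) →L[ℂ] WithLp 2 (K₀ × K₁)) ∘L
    ((A.coprod B).prod (C.coprod D))) ∘L
    ((WithLp.prodContinuousLinearEquiv 2 ℂ H₀ H₁ : WithLp 2 (H₀ × H₁) →L[ℂ] (H₀ × H₁)))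

theorem Commute.of_mul_self_of_nonneg {A : Type*} [CStarAlgebra A] [PartialOrder A]
    [StarOrderedRing A] {a b : A} (ha : 0 ≤ a) (h : Commute (a * a) b) : Commute a b := by
  rw [← CFC.sqrt_unique rfl ha, CFC.sqrt_eq_cfc]
  exact h.cfc_nnreal _

section BlockOp

variable {H₀ H₁ K₀ K₁ L₀ L₁ : Type*}
    [NormedAddCommGroup H₀] [InnerProductSpace ℂ H₀]
    [NormedAddCommGroup H₁] [InnerProductSpace ℂ H₁]
    [NormedAddCommGroup K₀] [InnerProductSpace ℂ K₀]
    [NormedAddCommGroup K₁] [InnerProductSpace ℂ K₁]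
    [NormedAddCommGroup L₀] [InnerProductSpace ℂ L₀]
    [NormedAddCommGroup L₁] [InnerProductSpace ℂ L₁]
    (A : H₀ →L[ℂ] K₀) (B : H₁ →L[ℂ] K₀) (C : H₀ →L[ℂ] K₁) (D : H₁ →L[ℂ] K₁)

@[simp]
theorem blockOp_apply_fst (x : WithLp 2 (H₀ × H₁)) :
    (blockOp A B C D x).fst = A x.fst + B x.snd := rfl

@[simp]
theorem blockOp_apply_snd (x : WithLp 2 (H₀ × H₁)) :
    (blockOp A B C D x).snd = C x.fst + D x.snd := rfl

theorem blockOp_comp (A' : K₀ →L[ℂ] L₀) (B' : K₁ →L[ℂ] L₀) (C' : K₀ →L[ℂ] L₁)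
    (D' : K₁ →L[ℂ] L₁) :
    blockOp A' B' C' D' ∘L blockOp A B C D
      = blockOp (A' ∘L A + B' ∘L C) (A' ∘L B + B' ∘L D)
          (C' ∘L A + D' ∘L C) (C' ∘L B + D' ∘L D) := by
  ext x : 1
  refine (WithLp.ext_iff 2).mpr (Prod.ext ?_ ?_) <;>
  · simp only [WithLp.ofLp_fst, WithLp.ofLp_snd, comp_apply, blockOp_apply_fst,
      blockOp_apply_snd, map_add, add_apply]
    abel

theorem blockOp_one : blockOp (1 : H₀ →L[ℂ] H₀) 0 0 (1 : H₁ →L[ℂ] H₁) = 1 := by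
  ext x : 1
  refine (WithLp.ext_iff 2).mpr (Prod.ext ?_ ?_) <;> simp

theorem adjoint_blockOp [CompleteSpace H₀] [CompleteSpace H₁] [CompleteSpace K₀]
    [CompleteSpace K₁] :
    adjoint (blockOp A B C D) = blockOp (adjoint A) (adjoint C) (adjoint B) (adjoint D) := by
  refine ((eq_adjoint_iff _ _).mpr fun x y ↦ ?_).symm
  simp only [WithLp.prod_inner_apply, WithLp.ofLp_fst, WithLp.ofLp_snd, blockOp_apply_fst,
    blockOp_apply_snd, inner_add_left, inner_add_right, adjoint_inner_left]
  ring

end BlockOp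

section RotationBlock

variable {H : Type*} [NormedAddCommGroup H] [InnerProductSpace ℂ H] [CompleteSpace H]
    {X R : H →L[ℂ] H}

noncomputable def rotationBlock (X R : H →L[ℂ] H) : WithLp 2 (H × H) →L[ℂ] WithLp 2 (H × H) :=
  blockOp (adjoint X ∘L R) R R (-(R ∘L X))

theorem adjoint_rotationBlock (hR : adjoint R = R) :
    adjoint (rotationBlock X R) = blockOp (R ∘L X) R R (-(adjoint X ∘L R)) := by
  simp only [rotationBlock, adjoint_blockOp, adjoint_comp, map_neg, adjoint_adjoint, hR]

variable (hXY : Commute X (adjoint X)) (hXR : Commute X R) (hYR : Commute (adjoint X) R)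
    (hR : adjoint R = R)
include hXY hXR hYR hR

theorem rotationBlock_mem_unitary (hRR : (1 + adjoint X * X) * (R * R) = 1) :
    rotationBlock X R ∈ unitary (WithLp 2 (H × H) →L[ℂ] WithLp 2 (H × H)) := by
  have hRR' : adjoint X * (X * (R * R)) = 1 - R * R := by
    rw [eq_sub_iff_add_eq', ← mul_assoc, ← one_add_mul, hRR]
  rw [Unitary.mem_iff, star_eq_adjoint, adjoint_rotationBlock hR, mul_def, mul_def, rotationBlock,
    blockOp_comp, blockOp_comp, ← blockOp_one]
  -- In each entry move `X*` and `X` to the left of `R`, and `X*` to the left of `X`; what is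
  -- left is an identity of abelian groups.
  constructor <;> congr 1 <;>
  · simp only [← mul_def, mul_neg, neg_mul, neg_neg, mul_assoc, hXR.symm.left_comm, hXR.symm.eq,
      hYR.symm.left_comm, hXY.left_comm, hRR']
    abel

theorem rotationBlock_conj {Q : H →L[ℂ] H} (hQ : Q = (1 + adjoint X * X) * R)
    (T₀ T₁ : H →L[ℂ] H) :
    rotationBlock X R ∘L blockOp T₀ (X ∘L T₁ - T₀ ∘L X) 0 T₁ ∘L adjoint (rotationBlock X R)
      = blockOp (Q ∘L T₁ ∘L R) (adjoint X ∘L (R ∘L T₀ ∘L Q) - (Q ∘L T₁ ∘L R) ∘L adjoint X) 0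
          (R ∘L T₀ ∘L Q) := by
  rw [adjoint_rotationBlock hR, rotationBlock, blockOp_comp, blockOp_comp]
  congr 1 <;>
  · simp only [← mul_def, hQ, mul_neg, neg_mul, neg_neg, mul_add, add_mul, mul_sub, sub_mul,
      one_mul, zero_mul, zero_add, mul_assoc, hXR.symm.left_comm, hXR.symm.eq, hYR.symm.eq,
      hXY.left_comm]
    abel

end RotationBlock

/-- for a normal `X`, with `P = 1 + X*X`, `Q = P^{1/2}` (the positive square
root), `T̃₀ = P^{1/2}T₁P^{-1/2}`, `T̃₁ = P^{-1/2}T₀P^{1/2}`, the block operator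
`U = [[X*P^{-1/2}, P^{-1/2}],[P^{-1/2}, -P^{-1/2}X]]` is unitary and `UTU* = T̃`. -/
theorem stmt4 {H : Type*}
    [NormedAddCommGroup H] [InnerProductSpace ℂ H] [CompleteSpace H]
    (X T₀ T₁ : H →L[ℂ] H)
    (hX : adjoint X ∘L X = X ∘L adjoint X)
    (Q Qinv : H →L[ℂ] H)
    (hQpos : Q.IsPositive)
    (hQsq : Q ∘L Q = 1 + adjoint X ∘L X)
    (hQQi : Q ∘L Qinv = 1) (hQiQ : Qinv ∘L Q = 1)
    (T' T'' : H →L[ℂ] H)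
    (hT' : T' = Q ∘L T₁ ∘L Qinv) (hT'' : T'' = Qinv ∘L T₀ ∘L Q)
    (U : WithLp 2 (H × H) →L[ℂ] WithLp 2 (H × H))
    (hU : U = blockOp (adjoint X ∘L Qinv) Qinv Qinv (-(Qinv ∘L X))) :
    adjoint U ∘L U = 1 ∧ U ∘L adjoint U = 1 ∧
    U ∘L blockOp T₀ (X ∘L T₁ - T₀ ∘L X) 0 T₁ ∘L adjoint U
      = blockOp T' (adjoint X ∘L T'' - T' ∘L adjoint X) 0 T'' := by
  let _ : Invertible Q := ⟨Qinv, hQiQ, hQQi⟩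
  have hQsq' : Q * Q = 1 + adjoint X * X := hQsq
  have hQQi' : Q * Qinv = 1 := hQQi
  have hXY : Commute X (adjoint X) := hX.symm
  have hXQ : Commute X Q := by
    refine (Commute.of_mul_self_of_nonneg ((nonneg_iff_isPositive Q).mpr hQpos) ?_).symm
    rw [hQsq']
    exact (Commute.one_left X).add_left (hXY.symm.mul_left (Commute.refl X))
  have hXR : Commute X Qinv := hXQ.invOf_right
  have hR : adjoint Qinv = Qinv := IsSelfAdjoint.invOf Q hQpos.isSelfAdjoint
  have hYR : Commute (adjoint X) Qinv := by simpa only [star_eq_adjoint, hR] using hXR.star_star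
  have hRR : (1 + adjoint X * X) * (Qinv * Qinv) = 1 := by
    rw [← hQsq', mul_assoc, ← mul_assoc Q Qinv, hQQi', one_mul, hQQi']
  have hQ : Q = (1 + adjoint X * X) * Qinv := by rw [← hQsq', mul_assoc, hQQi', mul_one]
  have hU_mem := rotationBlock_mem_unitary hXY hXR hYR hR hRR
  subst hU hT' hT''
  exact ⟨hU_mem.1, hU_mem.2, rotationBlock_conj hXY hXR hYR hR hQ T₀ T₁⟩
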